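/- Let f : ℤ → ℝ be nonnegative and of bounded variation, let α ≥ 1/3, and let x < y be integers with 𝓜^α f(x) < 𝓜^α f(y). Then there exists an integer w > x such that f(w) ≥ 𝓜^α f(y); in particular 𝓜^α f(y) − 𝓜^α f(x) ≤ f(w) − f(x). -/

import Mathlib

open scoped ENNReal

/-- The discrete nontangential Hardy–Littlewood maximal function:
`𝓜^α f(x) = sup { (1/(2R+1)) Σ_{i=y−R}^{y+R} f(i) : R ∈ ℕ, y ∈ ℤ, |x − y| ≤ ⌈αR⌉ }`. -/
noncomputable def dntMax (α : ℝ) (f : ℤ → ℝ) (x : ℤ) : ℝ :=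
  sSup { a : ℝ | ∃ R : ℕ, ∃ y : ℤ, |x - y| ≤ ⌈α * (R : ℝ)⌉ ∧
    a = (1 / (2 * (R : ℝ) + 1)) * ∑ i ∈ Finset.Icc (y - (R : ℤ)) (y + (R : ℤ)), f i }

/-- The total variation of a discrete function `g : ℤ → ℝ`,
`Var(g) = Σ_{i∈ℤ} |g(i+1) − g(i)|`, valued in `ℝ≥0∞`. -/
noncomputable def dVar (g : ℤ → ℝ) : ℝ≥0∞ :=
  ∑' i : ℤ, ENNReal.ofReal |g (i + 1) - g i|

namespace DNTAux

noncomputable def davg (f : ℤ → ℝ) (R : ℕ) (c : ℤ) : ℝ :=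
  (1 / (2 * (R : ℝ) + 1)) * ∑ i ∈ Finset.Icc (c - (R : ℤ)) (c + (R : ℤ)), f i

def dset (α : ℝ) (f : ℤ → ℝ) (x : ℤ) : Set ℝ :=
  { a : ℝ | ∃ R : ℕ, ∃ c : ℤ, |x - c| ≤ ⌈α * (R : ℝ)⌉ ∧ a = davg f R c }

noncomputable def dntMax' (α : ℝ) (f : ℤ → ℝ) (x : ℤ) : ℝ := sSup (dset α f x)

lemma dntMax_eq (α : ℝ) (f : ℤ → ℝ) (x : ℤ) : dntMax α f x = dntMax' α f x := rfl

lemma card_IccR (c : ℤ) (R : ℕ) : (Finset.Icc (c - (R:ℤ)) (c + (R:ℤ))).card = 2*R+1 := by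
  rw [Int.card_Icc]; omega

lemma twoR1_pos (R : ℕ) : (0:ℝ) < 2 * (R:ℝ) + 1 := by positivity

lemma davg_nonneg {f : ℤ → ℝ} (hf0 : ∀ n, 0 ≤ f n) (R : ℕ) (c : ℤ) : 0 ≤ davg f R c := by
  unfold davg
  have := Finset.sum_nonneg (fun i _ => hf0 i) (s := Finset.Icc (c - (R:ℤ)) (c + (R:ℤ)))
  positivity

lemma sum_le_of_bound {f : ℤ → ℝ} {B : ℝ} (hB : ∀ n, f n ≤ B) (R : ℕ) (c : ℤ) :
    ∑ i ∈ Finset.Icc (c - (R:ℤ)) (c + (R:ℤ)), f i ≤ (2 * (R:ℝ) + 1) * B := by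
  calc ∑ i ∈ Finset.Icc (c - (R:ℤ)) (c + (R:ℤ)), f i
      ≤ (Finset.Icc (c - (R:ℤ)) (c + (R:ℤ))).card • B :=
        Finset.sum_le_card_nsmul _ _ _ (fun i _ => hB i)
    _ = (2 * (R:ℝ) + 1) * B := by rw [card_IccR]; push_cast [nsmul_eq_mul]; ring

lemma davg_le_bound {f : ℤ → ℝ} {B : ℝ} (hB : ∀ n, f n ≤ B) (R : ℕ) (c : ℤ) :
    davg f R c ≤ B := by
  unfold davg
  rw [one_div, inv_mul_le_iff₀ (twoR1_pos R)]
  simpa [mul_comm] using sum_le_of_bound hB R c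

lemma mem_dset {α : ℝ} {f : ℤ → ℝ} {x c : ℤ} {R : ℕ} (h : |x - c| ≤ ⌈α * (R:ℝ)⌉) :
    davg f R c ∈ dset α f x := ⟨R, c, h, rfl⟩

lemma bddAbove_dset {α : ℝ} {f : ℤ → ℝ} {B : ℝ} (hB : ∀ n, f n ≤ B) (x : ℤ) :
    BddAbove (dset α f x) := by
  refine ⟨B, ?_⟩
  rintro a ⟨R, c, h, rfl⟩
  exact davg_le_bound hB R c

lemma davg_zero (f : ℤ → ℝ) (c : ℤ) : davg f 0 c = f c := by simp [davg]

lemma self_mem_dset {α : ℝ} (hα0 : 0 ≤ α) (f : ℤ → ℝ) (x : ℤ) : f x ∈ dset α f x := by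
  refine ⟨0, x, by simp, (davg_zero f x).symm⟩

lemma davg_le_dntMax {α : ℝ} {f : ℤ → ℝ} {B : ℝ} (hB : ∀ n, f n ≤ B) {x c : ℤ} {R : ℕ}
    (h : |x - c| ≤ ⌈α * (R:ℝ)⌉) : davg f R c ≤ dntMax' α f x :=
  le_csSup (bddAbove_dset hB x) (mem_dset h)

lemma f_le_dntMax {α : ℝ} (hα0 : 0 ≤ α) {f : ℤ → ℝ} {B : ℝ} (hB : ∀ n, f n ≤ B) (x : ℤ) :
    f x ≤ dntMax' α f x :=
  le_csSup (bddAbove_dset hB x) (self_mem_dset hα0 f x)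

lemma tele_sum (f : ℤ → ℝ) (m n : ℤ) (hn : m ≤ n) :
    ∑ i ∈ Finset.Ico m n, (f (i+1) - f i) = f n - f m := by
  obtain ⟨k, rfl⟩ := Int.le.dest hn
  induction k with
  | zero => simp
  | succ k ih =>
      have hins : Finset.Ico m (m + (k+1 : ℕ)) = insert (m + k) (Finset.Ico m (m + (k:ℕ))) := by
        ext i
        simp only [Finset.mem_Ico, Finset.mem_insert]
        omega
      rw [hins, Finset.sum_insert (by simp), ih (by omega)]
      have : (m + (k:ℕ)) + 1 = m + ((k:ℕ)+1) := by push_cast; ring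
      rw [this]
      push_cast
      ring

lemma var_bound {f : ℤ → ℝ} (hbv : dVar f ≠ ⊤) {m n : ℤ} (hmn : m ≤ n) :
    |f n - f m| ≤ (dVar f).toReal := by
  have h1 : |f n - f m| ≤ ∑ i ∈ Finset.Ico m n, |f (i+1) - f i| := by
    rw [← tele_sum f m n hmn]
    exact Finset.abs_sum_le_sum_abs _ _
  have h2 : ∑ i ∈ Finset.Ico m n, |f (i+1) - f i| ≤ (dVar f).toReal := by
    rw [← ENNReal.ofReal_le_iff_le_toReal hbv,
      ENNReal.ofReal_sum_of_nonneg (fun i _ => abs_nonneg _)]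
    exact ENNReal.sum_le_tsum _
  linarith

lemma f_le_B {f : ℤ → ℝ} (hbv : dVar f ≠ ⊤) (n : ℤ) :
    f n ≤ f 0 + (dVar f).toReal := by
  rcases le_total 0 n with h | h
  · have := var_bound hbv h
    have := abs_le.mp this
    linarith [this.2]
  · have := var_bound hbv h
    have := abs_le.mp this
    linarith [this.1]

lemma attained {α : ℝ} (hα : 0 < α) {f : ℤ → ℝ} (hf0 : ∀ n, 0 ≤ f n) {B : ℝ}
    (hB : ∀ n, f n ≤ B) (hB0 : 0 ≤ B) {x y : ℤ} (hxy : x < y)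
    (hM : dntMax' α f x < dntMax' α f y) :
    ∃ R : ℕ, ∃ c : ℤ, |y - c| ≤ ⌈α * (R:ℝ)⌉ ∧ dntMax' α f y = davg f R c := by
  set ε : ℝ := dntMax' α f y - dntMax' α f x with hεdef
  have hε : 0 < ε := by simp [hεdef]; linarith
  -- choose k with α * k ≥ y - x
  obtain ⟨k, hk⟩ := exists_nat_ge (((y - x : ℤ) : ℝ) / α)
  have hαk : ((y - x : ℤ) : ℝ) ≤ α * k := by
    rw [div_le_iff₀ hα] at hk; linarith [hk]
  -- key estimate for large R
  have key : ∀ (R : ℕ) (c : ℤ), |y - c| ≤ ⌈α * (R:ℝ)⌉ →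
      davg f R c ≤ dntMax' α f x + (2 * k * B) / (2 * (R:ℝ) + 1) := by
    intro R c hadm
    have hRpos : (0:ℝ) < 2 * (R:ℝ) + 1 := by positivity
    have h1 : |x - c| ≤ ⌈α * ((R + k : ℕ) : ℝ)⌉ := by
      have t1 : |x - c| ≤ |x - y| + |y - c| := abs_sub_le x y c
      have t2 : |x - y| = y - x := by rw [abs_sub_comm]; exact abs_of_pos (by omega)
      have t3 : (⌈α * (R:ℝ)⌉ + (y - x) : ℤ) ≤ ⌈α * ((R + k : ℕ) : ℝ)⌉ := by
        have : α * (R:ℝ) + ((y - x : ℤ) : ℝ) ≤ α * ((R + k : ℕ) : ℝ) := by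
          have h' := hαk; push_cast at h' ⊢; nlinarith
        calc (⌈α * (R:ℝ)⌉ + (y - x) : ℤ) = ⌈α * (R:ℝ) + ((y - x : ℤ) : ℝ)⌉ := by
              rw [Int.ceil_add_intCast]
          _ ≤ ⌈α * ((R + k : ℕ) : ℝ)⌉ := Int.ceil_le_ceil this
      omega
    have h2 : (2 * (R:ℝ) + 1) * davg f R c ≤ (2 * ((R+k : ℕ):ℝ) + 1) * davg f (R+k) c := by
      have e1 : (2 * (R:ℝ) + 1) * davg f R c
          = ∑ i ∈ Finset.Icc (c - (R : ℤ)) (c + (R : ℤ)), f i := by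
        unfold davg; field_simp
      have e2 : (2 * ((R+k : ℕ):ℝ) + 1) * davg f (R+k) c
          = ∑ i ∈ Finset.Icc (c - ((R+k : ℕ) : ℤ)) (c + ((R+k : ℕ) : ℤ)), f i := by
        unfold davg; field_simp
      rw [e1, e2]
      apply Finset.sum_le_sum_of_subset_of_nonneg
      · apply Finset.Icc_subset_Icc <;> push_cast <;> omega
      · exact fun i _ _ => hf0 i
    have h3 : davg f (R+k) c ≤ dntMax' α f x := davg_le_dntMax hB h1
    have h4 : davg f (R+k) c ≤ B := davg_le_bound hB _ _
    have h0 : 0 ≤ davg f (R+k) c := davg_nonneg hf0 _ _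
    rw [← mul_le_mul_iff_right₀ hRpos]
    have hrhs : (2 * (R:ℝ) + 1) * (dntMax' α f x + 2 * k * B / (2 * (R:ℝ) + 1))
        = (2 * (R:ℝ) + 1) * dntMax' α f x + 2 * k * B := by
      field_simp
    rw [hrhs]
    have hkR : ((R + k : ℕ) : ℝ) = (R:ℝ) + (k:ℝ) := by push_cast; ring
    rw [hkR] at h2
    nlinarith [mul_le_mul_of_nonneg_left h3 (le_of_lt hRpos),
      mul_le_mul_of_nonneg_left h4 (by positivity : (0:ℝ) ≤ 2 * (k:ℝ))]
  -- choose R₀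
  obtain ⟨R₀, hR₀⟩ := exists_nat_gt ((2 * k * B) / ε)
  have hβ : (2 * (k:ℝ) * B) / (2 * (R₀:ℝ) + 1) < ε := by
    rw [div_lt_iff₀ (by positivity)]
    rw [div_lt_iff₀ hε] at hR₀
    nlinarith
  set β : ℝ := dntMax' α f x + (2 * (k:ℝ) * B) / (2 * (R₀:ℝ) + 1) with hβdef
  have hβlt : β < dntMax' α f y := by simp [hβdef, hεdef] at *; linarith
  -- the finite candidate set
  classical
  set T : Finset ℝ := Finset.image (fun p : ℕ × ℤ => davg f p.1 p.2)
    (((Finset.range (R₀+1)) ×ˢ (Finset.Icc (y - ⌈α*(R₀:ℝ)⌉) (y + ⌈α*(R₀:ℝ)⌉))).filter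
      (fun p => |y - p.2| ≤ ⌈α * (p.1:ℝ)⌉)) with hTdef
  have hceil0 : (0:ℤ) ≤ ⌈α*(R₀:ℝ)⌉ := Int.ceil_nonneg (by positivity)
  have hyT : davg f 0 y ∈ T := by
    rw [hTdef]
    refine Finset.mem_image.mpr ⟨((0:ℕ), y), ?_, rfl⟩
    rw [Finset.mem_filter]
    constructor
    · rw [Finset.mem_product]
      exact ⟨Finset.mem_range.mpr (by omega), Finset.mem_Icc.mpr (by omega)⟩
    · simp
  have hT : T.Nonempty := ⟨_, hyT⟩
  set m : ℝ := T.max' hT with hmdef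
  obtain ⟨p, hp, hpm⟩ := Finset.mem_image.mp (T.max'_mem hT)
  rw [Finset.mem_filter] at hp
  have hm_le : m ≤ dntMax' α f y := by
    rw [hmdef, ← hpm] at *
    exact davg_le_dntMax hB hp.2
  have hub : ∀ a ∈ dset α f y, a ≤ max m β := by
    rintro a ⟨R, c, hadm, rfl⟩
    by_cases hR : R ≤ R₀
    · apply le_trans _ (le_max_left m β)
      apply Finset.le_max' T
      rw [hTdef]
      refine Finset.mem_image.mpr ⟨(R, c), ?_, rfl⟩
      rw [Finset.mem_filter]
      refine ⟨Finset.mem_product.mpr ⟨Finset.mem_range.mpr (by omega), ?_⟩, hadm⟩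
      have : ⌈α * (R:ℝ)⌉ ≤ ⌈α*(R₀:ℝ)⌉ := by
        apply Int.ceil_le_ceil
        have : (R:ℝ) ≤ (R₀:ℝ) := by exact_mod_cast hR
        nlinarith
      rw [Finset.mem_Icc]
      have := abs_le.mp (le_trans hadm this)
      omega
    · apply le_trans _ (le_max_right m β)
      apply le_trans (key R c hadm)
      rw [hβdef]
      have hmono : (2 * (k:ℝ) * B) / (2 * (R:ℝ) + 1) ≤ (2 * (k:ℝ) * B) / (2 * (R₀:ℝ) + 1) := by
        apply div_le_div_of_nonneg_left (by positivity) (by positivity)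
        have : (R₀:ℝ) ≤ (R:ℝ) := by exact_mod_cast (by omega : R₀ ≤ R)
        linarith
      push_cast
      linarith
  have hsup : dntMax' α f y ≤ max m β :=
    csSup_le ⟨f y, self_mem_dset (le_of_lt hα) f y⟩ hub
  have hMm : dntMax' α f y = m := by
    rcases max_cases m β with ⟨h1, _⟩ | ⟨h1, _⟩
    · rw [h1] at hsup; linarith
    · rw [h1] at hsup; linarith
  exact ⟨p.1, p.2, hp.2, by rw [hMm, hmdef, ← hpm]⟩

theorem main (f : ℤ → ℝ) (hf0 : ∀ n, 0 ≤ f n) {B : ℝ}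
    (hB : ∀ n, f n ≤ B) (hB0 : 0 ≤ B)
    (α : ℝ) (hα : 1 / 3 ≤ α)
    (x y : ℤ) (hxy : x < y) (hM : dntMax' α f x < dntMax' α f y) :
    ∃ w : ℤ, x < w ∧ dntMax' α f y ≤ f w ∧
      dntMax' α f y - dntMax' α f x ≤ f w - f x := by
  have hα0 : (0:ℝ) < α := lt_of_lt_of_le (by norm_num) hα
  have hfx : f x ≤ dntMax' α f x := f_le_dntMax (le_of_lt hα0) hB x
  obtain ⟨R, c, hadm, hMeq⟩ := attained hα0 hf0 hB hB0 hxy hM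
  have habs := abs_le.mp hadm
  have hRpos : (0:ℝ) < 2 * (R:ℝ) + 1 := by positivity
  have hsum : ∑ i ∈ Finset.Icc (c - (R:ℤ)) (c + (R:ℤ)), f i
      = (2 * (R:ℝ) + 1) * dntMax' α f y := by
    rw [hMeq]; unfold davg; field_simp
  have hcard : (Finset.Icc (c - (R:ℤ)) (c + (R:ℤ))).card = 2*R+1 := by
    rw [Int.card_Icc]; omega
  rcases lt_or_ge x (c - (R:ℤ)) with h1 | h1
  · -- interval entirely to the right of x
    have hne : (Finset.Icc (c - (R:ℤ)) (c + (R:ℤ))).Nonempty :=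
      ⟨c, Finset.mem_Icc.mpr (by omega)⟩
    obtain ⟨w, hw, hwf⟩ := Finset.exists_le_of_sum_le hne
      (f := fun _ => dntMax' α f y) (g := f)
      (by
        rw [hsum, Finset.sum_const, hcard, nsmul_eq_mul]
        push_cast
        apply le_of_eq; ring)
    refine ⟨w, ?_, hwf, by linarith⟩
    have := (Finset.mem_Icc.mp hw).1
    omega
  · rcases le_or_gt c x with h2 | h2
    · -- the interval is admissible for x : contradiction
      exfalso
      have hxadm : |x - c| ≤ ⌈α * (R:ℝ)⌉ := by
        rw [abs_le]
        omega
      have := davg_le_dntMax (α := α) hB hxadm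
      rw [← hMeq] at this
      linarith
    · -- c - R ≤ x < c
      set d : ℕ := (x - (c - (R:ℤ))).toNat with hddef
      have hd : (d:ℤ) = x - c + R := by rw [hddef]; omega
      have hdR : (d:ℤ) < (R:ℤ) := by omega
      have hJadm : |x - x| ≤ ⌈α * (d:ℝ)⌉ := by
        simp only [sub_self, abs_zero]
        exact Int.ceil_nonneg (by positivity)
      have hJ := davg_le_dntMax (α := α) hB hJadm
      have hdpos : (0:ℝ) < 2 * (d:ℝ) + 1 := by positivity
      have hJsum : ∑ i ∈ Finset.Icc (x - (d:ℤ)) (x + (d:ℤ)), f i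
          ≤ (2 * (d:ℝ) + 1) * dntMax' α f x := by
        have : (2 * (d:ℝ) + 1) * davg f d x
            = ∑ i ∈ Finset.Icc (x - (d:ℤ)) (x + (d:ℤ)), f i := by
          unfold davg; field_simp
        nlinarith
      -- split the sum
      have hdisj : Disjoint (Finset.Icc (c - (R:ℤ)) (x + (d:ℤ)))
          (Finset.Ioc (x + (d:ℤ)) (c + (R:ℤ))) := by
        rw [Finset.disjoint_left]
        intro i hi1 hi2
        rw [Finset.mem_Icc] at hi1
        rw [Finset.mem_Ioc] at hi2
        omega
      have hunion : Finset.Icc (c - (R:ℤ)) (c + (R:ℤ))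
          = Finset.Icc (c - (R:ℤ)) (x + (d:ℤ)) ∪ Finset.Ioc (x + (d:ℤ)) (c + (R:ℤ)) := by
        ext i
        simp only [Finset.mem_Icc, Finset.mem_Ioc, Finset.mem_union]
        omega
      have hsplit : ∑ i ∈ Finset.Icc (c - (R:ℤ)) (c + (R:ℤ)), f i
          = ∑ i ∈ Finset.Icc (c - (R:ℤ)) (x + (d:ℤ)), f i
            + ∑ i ∈ Finset.Ioc (x + (d:ℤ)) (c + (R:ℤ)), f i := by
        rw [hunion, Finset.sum_union hdisj]
      have hJeq : Finset.Icc (c - (R:ℤ)) (x + (d:ℤ)) = Finset.Icc (x - (d:ℤ)) (x + (d:ℤ)) := by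
        congr 1; omega
      have hcardK : ((Finset.Ioc (x + (d:ℤ)) (c + (R:ℤ))).card : ℝ)
          = 2 * (R:ℝ) - 2 * (d:ℝ) := by
        rw [Int.card_Ioc]
        have : (c + (R:ℤ) - (x + (d:ℤ))).toNat = (2*R - 2*d : ℕ) := by omega
        rw [this, Nat.cast_sub (by omega : 2*d ≤ 2*R)]
        push_cast
        ring
      have hKsum : ∑ i ∈ Finset.Ioc (x + (d:ℤ)) (c + (R:ℤ)), (fun _ => dntMax' α f y) i
          < ∑ i ∈ Finset.Ioc (x + (d:ℤ)) (c + (R:ℤ)), f i := by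
        rw [Finset.sum_const, nsmul_eq_mul, hcardK]
        have e1 : ∑ i ∈ Finset.Ioc (x + (d:ℤ)) (c + (R:ℤ)), f i
            = (2 * (R:ℝ) + 1) * dntMax' α f y
              - ∑ i ∈ Finset.Icc (x - (d:ℤ)) (x + (d:ℤ)), f i := by
          rw [← hJeq, ← hsum, hsplit]; ring
        rw [e1]
        nlinarith
      obtain ⟨w, hw, hwf⟩ := Finset.exists_lt_of_sum_lt hKsum
      rw [Finset.mem_Ioc] at hw
      refine ⟨w, by omega, le_of_lt hwf, by linarith⟩

end DNTAux

/-- If `𝓜^α f(x) < 𝓜^α f(y)` with `x < y`, then there is an integer `w > x` with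
`f(w) ≥ 𝓜^α f(y)`; in particular `𝓜^α f(y) − 𝓜^α f(x) ≤ f(w) − f(x)`. -/
theorem dntMax_extremos (f : ℤ → ℝ) (hf0 : ∀ n, 0 ≤ f n) (hbv : dVar f ≠ ⊤)
    (α : ℝ) (hα : 1 / 3 ≤ α)
    (x y : ℤ) (hxy : x < y) (hM : dntMax α f x < dntMax α f y) :
    ∃ w : ℤ, x < w ∧ dntMax α f y ≤ f w ∧
      dntMax α f y - dntMax α f x ≤ f w - f x := by
  have hB : ∀ n, f n ≤ f 0 + (dVar f).toReal := DNTAux.f_le_B hbv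
  have hB0 : 0 ≤ f 0 + (dVar f).toReal := add_nonneg (hf0 0) ENNReal.toReal_nonneg
  have hM' : DNTAux.dntMax' α f x < DNTAux.dntMax' α f y := by
    rw [← DNTAux.dntMax_eq, ← DNTAux.dntMax_eq]; exact hM
  obtain ⟨w, hw1, hw2, hw3⟩ := DNTAux.main f hf0 hB hB0 α hα x y hxy hM'
  rw [DNTAux.dntMax_eq α f x, DNTAux.dntMax_eq α f y]
  exact ⟨w, hw1, hw2, hw3⟩
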